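/- Let 1 < p < q < ∞, let a ∈ L^∞(ℝ^n) be nonnegative, and let Q be a cube with |Q| > 1. Then for any measurable f with ‖f‖_{L^p(ℝ^n)} ≤ 1, ⨍_Q φ(x, ⨍_Q |f|dy) dx ≤ C ⨍_Q |f|^p dx ≤ C' ⨍_Q φ(x,|f(x)|)dx, where φ(x,t) = (1/p)t^p + (1/q)a(x)t^q and C, C' depend only on p, q, ‖a‖_∞. -/

import Mathlib

open MeasureTheory

/-- The axis-parallel cube with lower corner `z` and sidelength `ℓ`. -/
def cube (n : ℕ) (z : Fin n → ℝ) (ℓ : ℝ) : Set (Fin n → ℝ) :=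
  {x | ∀ i, z i ≤ x i ∧ x i ≤ z i + ℓ}

/-!
On a cube with `|Q| > 1` and `∫ |f|^p ≤ 1`, the average `A = ⨍_Q |f|^p` is at most `1`.
Jensen gives `(⨍_Q |f|)^p ≤ A`, so `⨍_Q |f| ≤ 1`, and then also `(⨍_Q |f|)^q ≤ (⨍_Q |f|)^p ≤ A`:
both terms of `φ(x, ⨍_Q |f|)` are bounded by a multiple of `A` depending only on `p, q, ‖a‖_∞`.
The second inequality is the pointwise bound `t^p ≤ p φ(x, t)`.
-/

open Set ENNReal

lemma cube_eq_Icc (n : ℕ) (z : Fin n → ℝ) (ℓ : ℝ) : cube n z ℓ = Icc z (z + fun _ => ℓ) := by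
  ext x
  simp [cube, Pi.le_def, forall_and]

lemma volume_cube (n : ℕ) (z : Fin n → ℝ) {ℓ : ℝ} (hℓ : 0 ≤ ℓ) :
    volume (cube n z ℓ) = ENNReal.ofReal (ℓ ^ n) := by
  rw [cube_eq_Icc, Real.volume_Icc_pi]
  simp [ENNReal.ofReal_pow hℓ]

instance (n : ℕ) (z : Fin n → ℝ) (ℓ : ℝ) : IsFiniteMeasure (volume.restrict (cube n z ℓ)) :=
  isFiniteMeasure_restrict.2 (cube_eq_Icc n z ℓ ▸ isCompact_Icc.measure_lt_top.ne)

lemma setAverage_cube (n : ℕ) (z : Fin n → ℝ) {ℓ : ℝ} (hℓ : 0 ≤ ℓ) (g : (Fin n → ℝ) → ℝ) :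
    ⨍ x in cube n z ℓ, g x = (ℓ ^ n)⁻¹ * ∫ x in cube n z ℓ, g x := by
  rw [setAverage_eq, measureReal_def, volume_cube n z hℓ, ENNReal.toReal_ofReal (by positivity),
    smul_eq_mul]

section Measure

variable {α : Type*} [MeasurableSpace α] {μ : Measure α}

lemma integrable_of_integrable_abs_rpow [IsFiniteMeasure μ] {p : ℝ} (hp : 1 ≤ p) {f : α → ℝ}
    (hf : AEStronglyMeasurable f μ) (h : Integrable (fun x => |f x| ^ p) μ) : Integrable f μ := by
  have hp0 : ENNReal.ofReal p ≠ 0 := (ENNReal.ofReal_pos.2 (by linarith)).ne'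
  refine MemLp.integrable (ENNReal.one_le_ofReal.2 hp) ?_
  rw [← integrable_norm_rpow_iff hf hp0 ofReal_ne_top, ENNReal.toReal_ofReal (by linarith)]
  exact h

lemma rpow_average_le_average_rpow [IsFiniteMeasure μ] [NeZero μ] {p : ℝ} (hp : 1 ≤ p)
    {g : α → ℝ} (hg : 0 ≤ᵐ[μ] g) (hgi : Integrable g μ) (hgpi : Integrable (fun x => g x ^ p) μ) :
    (⨍ x, g x ∂μ) ^ p ≤ ⨍ x, g x ^ p ∂μ :=
  (convexOn_rpow hp).map_average_le (Real.continuous_rpow_const (by linarith)).continuousOn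
    isClosed_Ici hg hgi hgpi

lemma average_le_integral_of_one_le_measure [IsFiniteMeasure μ] (hμ : 1 ≤ μ univ) {g : α → ℝ}
    (hg : 0 ≤ ∫ x, g x ∂μ) : ⨍ x, g x ∂μ ≤ ∫ x, g x ∂μ := by
  have hμ' : 1 ≤ μ.real univ := by
    rw [measureReal_def]
    simpa using ENNReal.toReal_mono (measure_ne_top μ univ) hμ
  rw [average_eq, smul_eq_mul]
  exact mul_le_of_le_one_left hg (inv_le_one_of_one_le₀ hμ')

lemma integral_le_one_of_lintegral_ofReal_le_one {g : α → ℝ} (hg : 0 ≤ᵐ[μ] g)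
    (hgm : AEStronglyMeasurable g μ) (h : ∫⁻ x, ENNReal.ofReal (g x) ∂μ ≤ 1) :
    ∫ x, g x ∂μ ≤ 1 := by
  rw [integral_eq_lintegral_of_nonneg_ae hg hgm]
  exact ENNReal.toReal_le_of_le_ofReal zero_le_one (by simpa using h)

lemma lintegral_ofReal_le_of_le_mul_average [IsFiniteMeasure μ] {F g : α → ℝ} {c : ℝ} (hc : 0 ≤ c)
    (hg : 0 ≤ᵐ[μ] g) (hgi : Integrable g μ) (hF : ∀ x, F x ≤ c * ⨍ y, g y ∂μ) :
    ∫⁻ x, ENNReal.ofReal (F x) ∂μ ≤ ENNReal.ofReal c * ∫⁻ x, ENNReal.ofReal (g x) ∂μ :=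
  calc ∫⁻ x, ENNReal.ofReal (F x) ∂μ ≤ ∫⁻ _, ENNReal.ofReal (c * ⨍ y, g y ∂μ) ∂μ :=
        lintegral_mono fun x => ENNReal.ofReal_le_ofReal (hF x)
    _ = ENNReal.ofReal (c * ∫ x, g x ∂μ) := by
        rw [lintegral_const, ← ofReal_toReal (measure_ne_top μ univ), ← measureReal_def, mul_comm,
          ← ENNReal.ofReal_mul measureReal_nonneg, mul_left_comm, ← smul_eq_mul (μ.real univ),
          measure_smul_average]
    _ = ENNReal.ofReal c * ∫⁻ x, ENNReal.ofReal (g x) ∂μ := by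
        rw [ENNReal.ofReal_mul hc, ofReal_integral_eq_lintegral_ofReal hgi hg]

lemma lintegral_ofReal_le_mul_lintegral_ofReal {F G : α → ℝ} {c : ℝ} (hc : 0 ≤ c)
    (h : ∀ x, F x ≤ c * G x) :
    ∫⁻ x, ENNReal.ofReal (F x) ∂μ ≤ ENNReal.ofReal c * ∫⁻ x, ENNReal.ofReal (G x) ∂μ := by
  rw [← lintegral_const_mul' _ _ ofReal_ne_top]
  exact lintegral_mono fun x => (ENNReal.ofReal_le_ofReal (h x)).trans (ENNReal.ofReal_mul hc).le

end Measure

lemma double_phase_le_of_rpow_le {p q b M t A : ℝ} (hp : 0 < p) (hpq : p ≤ q) (hb : 0 ≤ b)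
    (hbM : b ≤ M) (ht : 0 ≤ t) (htA : t ^ p ≤ A) (hA : A ≤ 1) :
    1 / p * t ^ p + 1 / q * b * t ^ q ≤ (1 / p + M / q) * A := by
  have hq : 0 < q := hp.trans_le hpq
  have hM : 0 ≤ M := hb.trans hbM
  have ht1 : t ≤ 1 := le_of_not_gt fun h => (Real.one_lt_rpow h hp).not_ge (htA.trans hA)
  have htq : t ^ q ≤ A := (Real.rpow_le_rpow_of_exponent_ge' ht ht1 hp.le hpq).trans htA
  calc 1 / p * t ^ p + 1 / q * b * t ^ q ≤ 1 / p * A + 1 / q * M * A := by gcongr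
    _ = (1 / p + M / q) * A := by ring

lemma rpow_le_mul_double_phase {p q b t : ℝ} (hp : 0 < p) (hq : 0 ≤ q) (hb : 0 ≤ b) (ht : 0 ≤ t) :
    t ^ p ≤ p * (1 / p * t ^ p + 1 / q * b * t ^ q) := by
  rw [mul_add, ← mul_assoc, mul_one_div_cancel hp.ne', one_mul]
  exact le_add_of_nonneg_right (by positivity)

theorem double_phase_jensen_large_cubes_general (n : ℕ) (p q : ℝ)
    (hp : 1 < p) (hpq : p < q) (M : ℝ)
    (a : (Fin n → ℝ) → ℝ) (ha : ∀ x, 0 ≤ a x)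
    (haM : ∀ x, a x ≤ M)
    (φ : (Fin n → ℝ) → ℝ → ℝ)
    (hφ : ∀ x t, φ x t = (1 / p) * t ^ p + (1 / q) * a x * t ^ q) :
    ∃ C C' : ℝ, 0 < C ∧ 0 < C' ∧
      ∀ (f : (Fin n → ℝ) → ℝ), Measurable f →
        (∫⁻ x, ENNReal.ofReal (|f x| ^ p)) ≤ 1 →
      ∀ (z : Fin n → ℝ) (ℓ : ℝ), 0 < ℓ → 1 < ℓ ^ n →
        (∫⁻ x in cube n z ℓ,
            ENNReal.ofReal (φ x ((ℓ ^ n)⁻¹ * ∫ y in cube n z ℓ, |f y|)))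
          ≤ ENNReal.ofReal C * ∫⁻ x in cube n z ℓ, ENNReal.ofReal (|f x| ^ p) ∧
        ENNReal.ofReal C * (∫⁻ x in cube n z ℓ, ENNReal.ofReal (|f x| ^ p))
          ≤ ENNReal.ofReal C' *
            ∫⁻ x in cube n z ℓ, ENNReal.ofReal (φ x |f x|) := by
  have hp0 : 0 < p := one_pos.trans hp
  have hq0 : 0 < q := hp0.trans hpq
  have hM : 0 ≤ M := (ha 0).trans (haM 0)
  refine ⟨1 / p + M / q, (1 / p + M / q) * p, by positivity, by positivity,
    fun f hf hf1 z ℓ hℓ hℓn => ⟨?_, ?_⟩⟩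
  · have hμ : 1 ≤ volume.restrict (cube n z ℓ) univ := by
      rw [Measure.restrict_apply_univ, volume_cube n z hℓ.le]
      exact ENNReal.one_le_ofReal.2 hℓn.le
    have : NeZero (volume.restrict (cube n z ℓ)) := ⟨fun h => by simp [h] at hμ⟩
    have hfp_nonneg : ∀ x, 0 ≤ |f x| ^ p := fun x => Real.rpow_nonneg (abs_nonneg _) p
    have hfp_meas : AEStronglyMeasurable (fun x => |f x| ^ p) (volume.restrict (cube n z ℓ)) :=
      ((Real.continuous_rpow_const hp0.le).measurable.comp hf.abs).aestronglyMeasurable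
    have hf1Q : ∫⁻ x in cube n z ℓ, ENNReal.ofReal (|f x| ^ p) ≤ 1 :=
      (setLIntegral_le_lintegral _ _).trans hf1
    have hfp : IntegrableOn (fun x => |f x| ^ p) (cube n z ℓ) :=
      ⟨hfp_meas,
        (hasFiniteIntegral_iff_ofReal (ae_of_all _ hfp_nonneg)).2 (hf1Q.trans_lt one_lt_top)⟩
    have hfi : IntegrableOn (fun x => |f x|) (cube n z ℓ) :=
      (integrable_of_integrable_abs_rpow hp.le hf.aestronglyMeasurable hfp).abs
    have hA : ⨍ x in cube n z ℓ, |f x| ^ p ≤ 1 :=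
      (average_le_integral_of_one_le_measure hμ (integral_nonneg hfp_nonneg)).trans
        (integral_le_one_of_lintegral_ofReal_le_one (ae_of_all _ hfp_nonneg) hfp_meas hf1Q)
    refine lintegral_ofReal_le_of_le_mul_average (by positivity) (ae_of_all _ hfp_nonneg) hfp
      fun x => ?_
    rw [hφ, ← setAverage_cube n z hℓ.le]
    exact double_phase_le_of_rpow_le hp0 hpq.le (ha x) (haM x)
      (integral_nonneg fun _ => abs_nonneg _)
      (rpow_average_le_average_rpow hp.le (ae_of_all _ fun _ => abs_nonneg _) hfi hfp) hA
  · rw [ENNReal.ofReal_mul (by positivity), mul_assoc]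
    gcongr
    exact lintegral_ofReal_le_mul_lintegral_ofReal hp0.le fun x =>
      (hφ x _).symm ▸ rpow_le_mul_double_phase hp0 hq0.le (ha x) (abs_nonneg _)

/-- Let `1 < p < q`, `a ∈ L^∞` nonnegative, and `Q` a cube with
`|Q| > 1`. Then for any `f` with `‖f‖_{L^p(ℝⁿ)} ≤ 1`,
`⨍_Q φ(x, ⨍_Q |f|) dx ≤ C·⨍_Q |f|^p dx ≤ C'·⨍_Q φ(x,|f(x)|) dx`,
where `φ(x,t) = (1/p)t^p + (1/q)a(x)t^q` and `C, C'` depend only on `p, q, ‖a‖_∞`. -/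
theorem double_phase_jensen_large_cubes (n : ℕ) (p q : ℝ)
    (hp : 1 < p) (hpq : p < q) (M : ℝ)
    (a : (Fin n → ℝ) → ℝ) (ha : ∀ x, 0 ≤ a x) (hameas : Measurable a)
    (haM : ∀ x, a x ≤ M)
    (φ : (Fin n → ℝ) → ℝ → ℝ)
    (hφ : ∀ x t, φ x t = (1 / p) * t ^ p + (1 / q) * a x * t ^ q) :
    ∃ C C' : ℝ, 0 < C ∧ 0 < C' ∧
      ∀ (f : (Fin n → ℝ) → ℝ), Measurable f →
        (∫⁻ x, ENNReal.ofReal (|f x| ^ p)) ≤ 1 →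
      ∀ (z : Fin n → ℝ) (ℓ : ℝ), 0 < ℓ → 1 < ℓ ^ n →
        (∫⁻ x in cube n z ℓ,
            ENNReal.ofReal (φ x ((ℓ ^ n)⁻¹ * ∫ y in cube n z ℓ, |f y|)))
          ≤ ENNReal.ofReal C * ∫⁻ x in cube n z ℓ, ENNReal.ofReal (|f x| ^ p) ∧
        ENNReal.ofReal C * (∫⁻ x in cube n z ℓ, ENNReal.ofReal (|f x| ^ p))
          ≤ ENNReal.ofReal C' *
            ∫⁻ x in cube n z ℓ, ENNReal.ofReal (φ x |f x|) :=
  double_phase_jensen_large_cubes_general n p q hp hpq M a ha haM φ hφ
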